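/- (Bounded relative error of the importance sampling estimator, complex central case.) Let N be a positive integer and λ_1, …, λ_N positive reals. For γ_0 > 0 set σ_i² = γ_0/(N λ_i), let ν_{γ_0} be the product over i of the exponential measures on [0,∞) with rate 1/σ_i², let L(w) = Π_{i=1}^N σ_i² e^{ (1/σ_i² − 1) w_i }, and let P(γ_0) = P( Σ_{i=1}^N λ_i W_i ≤ γ_0 ) for W_1, …, W_N i.i.d. exponential with rate 1. Then limsup_{γ_0 → 0⁺} [ ∫ 1{ Σ_i λ_i w_i ≤ γ_0 } L(w)² dν_{γ_0}(w) ] / P(γ_0)² ≤ 2^{2N} · e^{2N}; in particular this limsup is finite, so the importance sampling estimator has bounded relative error. -/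

import Mathlib

/-!
On the event `∑ λᵢ wᵢ ≤ γ₀` the biased coordinates satisfy `∑ wᵢ / σᵢ² = (N / γ₀) ∑ λᵢ wᵢ ≤ N`,
so the likelihood ratio is at most `(∏ σᵢ²) eᴺ` there, and the second moment is at most
`(∏ σᵢ²)² e²ᴺ`. Conversely the event contains the box `∏ [0, σᵢ²]`, whose probability under the
unbiased law is `∏ (1 - e^{-σᵢ²}) ≥ ∏ σᵢ² / 2` once every `σᵢ² ≤ 1`, i.e. for small `γ₀`.
The factor `∏ σᵢ²` cancels in the ratio.
-/

open MeasureTheory ProbabilityTheory Filter Real Set Finset Topology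

lemma Real.half_le_one_sub_exp_neg {a : ℝ} (h0 : 0 ≤ a) (h1 : a ≤ 1) : a / 2 ≤ 1 - exp (-a) := by
  -- `e^{-a} ≤ 1 / (1 + a) ≤ 1 - a / 2` on `[0, 1]`
  have hprod : exp (-a) * exp a = 1 := by rw [← exp_add, neg_add_cancel, exp_zero]
  nlinarith [add_one_le_exp a, exp_pos (-a)]

lemma MeasureTheory.integral_indicator_sq_le {α : Type*} [MeasurableSpace α] {μ : Measure α}
    [IsProbabilityMeasure μ] {f : α → ℝ} {S : Set α} {M : ℝ} (h : ∀ᵐ x ∂μ, x ∈ S → |f x| ≤ M) :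
    ∫ x, S.indicator (fun x => f x ^ 2) x ∂μ ≤ M ^ 2 := by
  have hbound : ∀ᵐ x ∂μ, ‖S.indicator (fun x => f x ^ 2) x‖ ≤ M ^ 2 := h.mono fun x hx => by
    by_cases hxS : x ∈ S
    · rw [indicator_of_mem hxS, norm_pow, Real.norm_eq_abs]
      exact pow_le_pow_left₀ (abs_nonneg _) (hx hxS) 2
    · simp [hxS, sq_nonneg]
  calc ∫ x, S.indicator (fun x => f x ^ 2) x ∂μ
      ≤ ‖∫ x, S.indicator (fun x => f x ^ 2) x ∂μ‖ := le_norm_self _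
    _ ≤ M ^ 2 := by simpa using norm_integral_le_of_norm_le_const hbound

namespace ProbabilityTheory

lemma ae_nonneg_expMeasure (r : ℝ) : ∀ᵐ x ∂expMeasure r, 0 ≤ x := by
  rw [ae_iff]
  simp only [not_le]
  change expMeasure r (Iio 0) = 0
  rw [expMeasure, gammaMeasure, withDensity_apply _ measurableSet_Iio]
  exact lintegral_exponentialPDF_of_nonpos le_rfl

lemma ae_nonneg_pi_expMeasure {ι : Type*} [Fintype ι] {r : ι → ℝ} (hr : ∀ i, 0 < r i) :
    ∀ᵐ w ∂Measure.pi fun i => expMeasure (r i), ∀ i, 0 ≤ w i :=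
  have := fun i => isProbabilityMeasure_expMeasure (hr i)
  eventually_all.2 fun _ => Measure.tendsto_eval_ae_ae.eventually (ae_nonneg_expMeasure _)

lemma expMeasure_real_Icc_zero {r a : ℝ} (hr : 0 < r) (ha : 0 ≤ a) :
    (expMeasure r).real (Icc 0 a) = 1 - exp (-(r * a)) := by
  have := isProbabilityMeasure_expMeasure hr
  have hIcc : Icc 0 a =ᵐ[expMeasure r] Iic a := by
    filter_upwards [ae_nonneg_expMeasure r] with x hx
    change (x ∈ Icc 0 a) = (x ∈ Iic a)
    simp [hx]
  rw [measureReal_congr hIcc, ← cdf_eq_real, cdf_expMeasure_eq hr, if_pos ha]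

lemma prod_half_le_pi_expMeasure_real_box {ι : Type*} [Fintype ι] {s : ι → ℝ}
    (h0 : ∀ i, 0 ≤ s i) (h1 : ∀ i, s i ≤ 1) :
    ∏ i, s i / 2 ≤ (Measure.pi fun _ : ι => expMeasure 1).real (univ.pi fun i => Icc 0 (s i)) := by
  have := isProbabilityMeasure_expMeasure one_pos
  rw [measureReal_def, Measure.pi_pi, ENNReal.toReal_prod]
  refine prod_le_prod (fun i _ => div_nonneg (h0 i) zero_le_two) fun i _ => ?_
  rw [← measureReal_def, expMeasure_real_Icc_zero one_pos (h0 i), one_mul]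
  exact half_le_one_sub_exp_neg (h0 i) (h1 i)

end ProbabilityTheory

section ImportanceSampling

variable {ι : Type*} [Fintype ι]

/-- `s i` is the variance `σᵢ²` of the `i`-th biased coordinate; this is the density of
`⊗ᵢ Exp(1)` with respect to `⊗ᵢ Exp(1 / sᵢ)`. -/
noncomputable def likelihoodRatio (s w : ι → ℝ) : ℝ := ∏ i, s i * exp ((1 / s i - 1) * w i)

lemma likelihoodRatio_nonneg {s : ι → ℝ} (hs : ∀ i, 0 ≤ s i) (w : ι → ℝ) :
    0 ≤ likelihoodRatio s w :=
  prod_nonneg fun i _ => mul_nonneg (hs i) (exp_pos _).le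

lemma likelihoodRatio_le {s w : ι → ℝ} (hs : ∀ i, 0 < s i) (hw : ∀ i, 0 ≤ w i) {c : ℝ}
    (hc : ∑ i, w i / s i ≤ c) : likelihoodRatio s w ≤ (∏ i, s i) * exp c := by
  rw [likelihoodRatio, prod_mul_distrib, ← exp_sum]
  have hA : 0 ≤ ∏ i, s i := prod_nonneg fun i _ => (hs i).le
  gcongr
  refine le_trans (sum_le_sum fun i _ => ?_) hc
  rw [sub_mul, one_mul, one_div_mul_eq_div]
  linarith [hw i]

lemma integral_indicator_likelihoodRatio_sq_le {s : ι → ℝ} (hs : ∀ i, 0 < s i)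
    {S : Set (ι → ℝ)} {c : ℝ} (hS : ∀ w ∈ S, (∀ i, 0 ≤ w i) → ∑ i, w i / s i ≤ c) :
    ∫ w, S.indicator (fun w => likelihoodRatio s w ^ 2) w ∂Measure.pi (fun i => expMeasure (1 / s i))
      ≤ ((∏ i, s i) * exp c) ^ 2 := by
  have := fun i => isProbabilityMeasure_expMeasure (one_div_pos.2 (hs i))
  refine integral_indicator_sq_le ?_
  filter_upwards [ae_nonneg_pi_expMeasure fun i => one_div_pos.2 (hs i)] with w hw hwS
  rw [abs_of_nonneg (likelihoodRatio_nonneg (fun i => (hs i).le) w)]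
  exact likelihoodRatio_le hs hw (hS w hwS hw)

theorem integral_indicator_likelihoodRatio_sq_div_sq_le {N : ℕ} {lam : Fin N → ℝ}
    (hlam : ∀ i, 0 < lam i) {γ : ℝ} (hγ : 0 < γ) (s : Fin N → ℝ)
    (hs : ∀ i, s i = γ / (N * lam i)) (hs1 : ∀ i, s i ≤ 1) :
    (∫ w, {w : Fin N → ℝ | ∑ i, lam i * w i ≤ γ}.indicator (fun w => likelihoodRatio s w ^ 2) w
        ∂Measure.pi fun i => expMeasure (1 / s i)) /
      (Measure.pi fun _ : Fin N => expMeasure 1).real {w | ∑ i, lam i * w i ≤ γ} ^ 2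
      ≤ 2 ^ (2 * N) * exp (2 * N) := by
  set S := {w : Fin N → ℝ | ∑ i, lam i * w i ≤ γ}
  have hNlam : ∀ i, 0 < (N : ℝ) * lam i := fun i => mul_pos (Nat.cast_pos.2 i.pos) (hlam i)
  have hspos : ∀ i, 0 < s i := fun i => hs i ▸ div_pos hγ (hNlam i)
  set A := ∏ i, s i
  have hA : 0 < A := prod_pos fun i _ => hspos i
  have hnum := integral_indicator_likelihoodRatio_sq_le hspos (S := S) (c := N) fun w hwS _ => by
    calc ∑ i, w i / s i = N / γ * ∑ i, lam i * w i := by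
          rw [mul_sum]
          refine sum_congr rfl fun i _ => ?_
          rw [hs i]
          field_simp [(hNlam i).ne']
      _ ≤ N / γ * γ := by gcongr; exact hwS
      _ = N := div_mul_cancel₀ _ hγ.ne'
  have hbox : univ.pi (fun i => Icc 0 (s i)) ⊆ S := fun w hw => by
    calc ∑ i, lam i * w i ≤ ∑ i, lam i * s i :=
          sum_le_sum fun i _ => mul_le_mul_of_nonneg_left (hw i (mem_univ i)).2 (hlam i).le
      _ = ∑ _i : Fin N, γ / N := sum_congr rfl fun i _ => by
          rw [hs i]
          field_simp [(hlam i).ne', (Nat.cast_pos.2 i.pos).ne']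
      _ ≤ γ := by
          rcases N.eq_zero_or_pos with rfl | hN
          · simpa using hγ.le
          · simp [field]
  have hden : A / 2 ^ N ≤ (Measure.pi fun _ : Fin N => expMeasure 1).real S := by
    have := isProbabilityMeasure_expMeasure one_pos
    calc A / 2 ^ N = ∏ i, s i / 2 := by simp [A, prod_div_distrib]
      _ ≤ _ := prod_half_le_pi_expMeasure_real_box (fun i => (hspos i).le) hs1
      _ ≤ _ := measureReal_mono hbox
  calc _ ≤ (A * exp N) ^ 2 / (A / 2 ^ N) ^ 2 := by gcongr
    _ = 2 ^ (2 * N) * exp (2 * N) := by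
      rw [show exp (2 * N) = exp N ^ 2 by rw [← exp_nat_mul]; push_cast; ring_nf]
      field_simp
      ring

theorem bounded_relative_error_complex_central_general
    (N : ℕ) (lam : Fin N → ℝ) (hlam : ∀ i, 0 < lam i)
    (σsq : ℝ → Fin N → ℝ)
    (hσsq : ∀ γ₀ i, σsq γ₀ i = γ₀ / (N * lam i))
    (ν : ℝ → Measure (Fin N → ℝ))
    (hν : ∀ γ₀, ν γ₀ = Measure.pi fun i => expMeasure (1 / σsq γ₀ i))
    (L : ℝ → (Fin N → ℝ) → ℝ)
    (hL : ∀ γ₀, L γ₀ = fun w => ∏ i, σsq γ₀ i *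
      Real.exp ((1 / σsq γ₀ i - 1) * w i))
    (P : ℝ → ℝ)
    (hP : ∀ γ₀, P γ₀ = ((Measure.pi fun _ : Fin N => expMeasure 1)
      {w : Fin N → ℝ | ∑ i, lam i * w i ≤ γ₀}).toReal) :
    Filter.limsup
      (fun γ₀ : ℝ =>
        (∫ w : Fin N → ℝ,
            Set.indicator {w : Fin N → ℝ | ∑ i, lam i * w i ≤ γ₀}
              (fun w => L γ₀ w ^ 2) w ∂(ν γ₀)) / P γ₀ ^ 2)
      (nhdsWithin 0 (Set.Ioi 0))
      ≤ 2 ^ (2 * N) * Real.exp (2 * N) := by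
  have hσsq_le_one : ∀ᶠ γ₀ in 𝓝[>] 0, ∀ i, σsq γ₀ i ≤ 1 := by
    refine eventually_all.2 fun i => nhdsWithin_le_nhds ?_
    have : Tendsto (fun γ₀ => γ₀ / (N * lam i)) (𝓝 0) (𝓝 0) := by
      simpa using (tendsto_id (x := 𝓝 (0 : ℝ))).div_const (N * lam i)
    exact (this.eventually (eventually_le_nhds zero_lt_one)).mono fun γ₀ h =>
      (hσsq γ₀ i).trans_le h
  refine limsup_le_of_le (isCoboundedUnder_le_of_eventually_le _ (.of_forall fun γ₀ =>
    div_nonneg (integral_nonneg fun w => indicator_nonneg (fun w _ => sq_nonneg _) w)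
      (sq_nonneg _))) ?_
  filter_upwards [hσsq_le_one, self_mem_nhdsWithin] with γ₀ hσ1 (hγ₀ : 0 < γ₀)
  rw [hν, hL, hP]
  exact integral_indicator_likelihoodRatio_sq_div_sq_le hlam hγ₀ (σsq γ₀) (hσsq γ₀) hσ1

/-- Bounded relative error of the importance sampling estimator
(complex central case): with `σᵢ² = γ₀/(N λᵢ)`, biased measure
`ν_{γ₀} = ⊗ᵢ Exp(1/σᵢ²)` and likelihood ratio `L(w) = ∏ᵢ σᵢ² e^{(1/σᵢ²−1)wᵢ}`,
`limsup_{γ₀→0⁺} (∫ 1{∑ λᵢ wᵢ ≤ γ₀} L(w)² dν_{γ₀}) / P(γ₀)² ≤ 2^{2N} e^{2N}`,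
which is finite. -/
theorem bounded_relative_error_complex_central
    (N : ℕ) (hN : 0 < N) (lam : Fin N → ℝ) (hlam : ∀ i, 0 < lam i)
    (σsq : ℝ → Fin N → ℝ)
    (hσsq : ∀ γ₀ i, σsq γ₀ i = γ₀ / (N * lam i))
    (ν : ℝ → Measure (Fin N → ℝ))
    (hν : ∀ γ₀, ν γ₀ = Measure.pi fun i => expMeasure (1 / σsq γ₀ i))
    (L : ℝ → (Fin N → ℝ) → ℝ)
    (hL : ∀ γ₀, L γ₀ = fun w => ∏ i, σsq γ₀ i *
      Real.exp ((1 / σsq γ₀ i - 1) * w i))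
    (P : ℝ → ℝ)
    (hP : ∀ γ₀, P γ₀ = ((Measure.pi fun _ : Fin N => expMeasure 1)
      {w : Fin N → ℝ | ∑ i, lam i * w i ≤ γ₀}).toReal) :
    Filter.limsup
      (fun γ₀ : ℝ =>
        (∫ w : Fin N → ℝ,
            Set.indicator {w : Fin N → ℝ | ∑ i, lam i * w i ≤ γ₀}
              (fun w => L γ₀ w ^ 2) w ∂(ν γ₀)) / P γ₀ ^ 2)
      (nhdsWithin 0 (Set.Ioi 0))
      ≤ 2 ^ (2 * N) * Real.exp (2 * N) :=
  bounded_relative_error_complex_central_general N lam hlam σsq hσsq ν hν L hL P hP
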